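/- Let p ≥ 5 be an integer. For every n ≥ 1 the level word L'_n of the black metallic tree is a prefix of the level word L_n of the white metallic tree; consequently, a node lying in position j of level n+1 of the black tree (1 ≤ j ≤ b (n+1)) has number (∑_{i=0}^{n} b i) + j = m n + j in the black tree's natural numbering and number M n + j in the white tree's natural numbering, so that its white-tree number exceeds its black-tree number by exactly M (n−1) (with M (−1) = 0). -/
import Mathlib


/-- The white metallic sequence: `m 0 = 1`, `m 1 = p - 2`,
`m (n+2) = (p-2) * m (n+1) - m n`. -/
def mseq (p : ℕ) : ℕ → ℤ
  | 0 => 1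
  | 1 => (p : ℤ) - 2
  | n + 2 => ((p : ℤ) - 2) * mseq p (n + 1) - mseq p n

/-- The black metallic sequence: `b 0 = 1`, `b 1 = p - 3`,
`b (n+2) = (p-2) * b (n+1) - b n`. -/
def bseq (p : ℕ) : ℕ → ℤ
  | 0 => 1
  | 1 => (p : ℤ) - 3
  | n + 2 => ((p : ℤ) - 2) * bseq p (n + 1) - bseq p n

/-- The two kinds of nodes of a metallic tree. -/
inductive Letter
  | B : Letter
  | W : Letter
deriving DecidableEq

/-- The generating rules: `B → B W^(p-4)` and `W → B W^(p-3)`. -/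
def subst (p : ℕ) : Letter → List Letter
  | Letter.B => Letter.B :: List.replicate (p - 4) Letter.W
  | Letter.W => Letter.B :: List.replicate (p - 3) Letter.W

/-- Level words of the white metallic tree (rooted at a white node). -/
def whiteLevel (p : ℕ) : ℕ → List Letter
  | 0 => [Letter.W]
  | n + 1 => (whiteLevel p n).flatMap (subst p)

/-- Level words of the black metallic tree (rooted at a black node). -/
def blackLevel (p : ℕ) : ℕ → List Letter
  | 0 => [Letter.B]
  | n + 1 => (blackLevel p n).flatMap (subst p)

/-- `MsumBefore p n = ∑_{i=0}^{n-1} m i = M (n-1)`, the number of nodes of the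
white metallic tree on the levels before level `n` (so `MsumBefore p 0 = M (-1) = 0`). -/
def MsumBefore (p : ℕ) (n : ℕ) : ℤ := ∑ i ∈ Finset.range n, mseq p i


lemma mseq_rec (p n : ℕ) : mseq p (n+2) = ((p:ℤ)-2) * mseq p (n+1) - mseq p n := by
  rw [mseq]

lemma bseq_rec (p n : ℕ) : bseq p (n+2) = ((p:ℤ)-2) * bseq p (n+1) - bseq p n := by
  rw [bseq]

lemma bseq_eq (p : ℕ) (n : ℕ) : bseq p (n+1) = mseq p (n+1) - mseq p n := by
  induction n using Nat.twoStepInduction with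
  | zero => simp [bseq, mseq]; ring
  | one =>
    rw [bseq_rec p 0, mseq_rec p 0]
    simp [bseq, mseq]; ring
  | more n ih1 ih2 =>
    have ih2' : bseq p (n+2) = mseq p (n+2) - mseq p (n+1) := ih2
    show bseq p (n+1+2) = mseq p (n+1+2) - mseq p (n+2)
    rw [bseq_rec p (n+1), mseq_rec p (n+1), mseq_rec p n, ih1, ih2', mseq_rec p n]
    ring

lemma sum_bseq (p : ℕ) (n : ℕ) :
    ∑ i ∈ Finset.range (n+1), bseq p i = mseq p n := by
  induction n with
  | zero => simp [bseq, mseq]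
  | succ n ih => rw [Finset.sum_range_succ, ih, bseq_eq]; ring

lemma prefix_flatMap {l₁ l₂ : List Letter} (f : Letter → List Letter)
    (h : l₁.IsPrefix l₂) : (l₁.flatMap f).IsPrefix (l₂.flatMap f) := by
  obtain ⟨t, ht⟩ := h
  exact ⟨t.flatMap f, by rw [← ht, List.flatMap_append]⟩

lemma black_prefix (p : ℕ) (hp : 5 ≤ p) (n : ℕ) (hn : 1 ≤ n) :
    (blackLevel p n).IsPrefix (whiteLevel p n) := by
  induction n with
  | zero => omega
  | succ n ih =>
    rcases Nat.eq_or_lt_of_le hn with h | h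
    · have : n = 0 := by omega
      subst this
      show (blackLevel p 1).IsPrefix (whiteLevel p 1)
      have hb : blackLevel p 1 = Letter.B :: List.replicate (p - 4) Letter.W := by
        simp [blackLevel, subst]
      have hw : whiteLevel p 1 = Letter.B :: List.replicate (p - 3) Letter.W := by
        simp [whiteLevel, subst]
      rw [hb, hw]
      refine ⟨[Letter.W], ?_⟩
      rw [List.cons_append, ← List.replicate_succ']
      congr 2
      omega
    · exact prefix_flatMap _ (ih (by omega))

/-- for every `n ≥ 1` the level word `L' n` of the black metallic
tree is a prefix of the level word `L n` of the white metallic tree;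
consequently, a node in position `j` of level `n+1` of the black tree
(`1 ≤ j ≤ b (n+1)`) has number `(∑_{i=0}^{n} b i) + j = m n + j` in the black
tree's numbering and number `M n + j` in the white tree's numbering, the white
number exceeding the black one by exactly `M (n-1)` (with `M (-1) = 0`). -/
theorem blackLevel_prefix_and_numbering (p : ℕ) (hp : 5 ≤ p) :
    (∀ n : ℕ, 1 ≤ n → (blackLevel p n).IsPrefix (whiteLevel p n)) ∧
    (∀ n : ℕ, ∀ j : ℤ, 1 ≤ j → j ≤ bseq p (n + 1) →
      (∑ i ∈ Finset.range (n + 1), bseq p i) + j = mseq p n + j ∧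
      (MsumBefore p (n + 1) + j) - (mseq p n + j) = MsumBefore p n) := by
  constructor
  · exact fun n hn => black_prefix p hp n hn
  · intro n j _ _
    refine ⟨by rw [sum_bseq], ?_⟩
    have : MsumBefore p (n + 1) = MsumBefore p n + mseq p n := by
      simp [MsumBefore, Finset.sum_range_succ]
    rw [this]; ring
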